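/- arXiv:1709.09285 — 3 statements merged into one kernel-verified Lean document; each statement's English description precedes it below -/
import Mathlib

section
/- Let G be an abelian group, let S be a finite sequence of elements of G, let n ≥ 1, and let S' be the subsequence of S in which each element x appears with multiplicity min{v_x(S), n}. Then Σ_n(S) = Σ_n(S'). -/
/-- The set of `n`-term subsequence sums of the finite sequence (multiset) `S`. -/
def subseqSums {G : Type*} [AddCommGroup G] (S : Multiset G) (n : ℕ) : Set G :=
  {x | ∃ T ≤ S, Multiset.card T = n ∧ T.sum = x}

theorem stmt_4 {G : Type*} [AddCommGroup G] [DecidableEq G]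
    (S S' : Multiset G) (n : ℕ) (hn : 1 ≤ n)
    (hS' : ∀ x : G, S'.count x = min (S.count x) n) :
    subseqSums S n = subseqSums S' n := by
  have hle : S' ≤ S := by
    rw [Multiset.le_iff_count]
    intro x
    rw [hS' x]
    exact min_le_left _ _
  ext y
  constructor
  · rintro ⟨T, hT, hcard, hsum⟩
    refine ⟨T, ?_, hcard, hsum⟩
    rw [Multiset.le_iff_count]
    intro x
    rw [hS' x]
    exact le_min (Multiset.count_le_of_le x hT)
      (hcard ▸ Multiset.count_le_card x T)
  · rintro ⟨T, hT, hcard, hsum⟩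
    exact ⟨T, hT.trans hle, hcard, hsum⟩
end

section
/- Let G be a cyclic group of composite order generated by g, let p be the smallest prime divisor of |G|, and let H ≤ G be the subgroup of order p. Let S be the sequence consisting of g repeated |G|/p − 1 times together with each element h of H repeated |G|/p times. Then |S| = |G| + |G|/p − 1 and Σ_{|G|}(S) ≠ G. -/
namespace Multiset

variable {α : Type*}

theorem exists_le_le_eq_add_of_le_add [DecidableEq α] {s t u : Multiset α} (h : s ≤ t + u) :
    ∃ s₁ ≤ t, ∃ s₂ ≤ u, s = s₁ + s₂ :=
  ⟨s ∩ t, inter_le_right, s - t, Multiset.sub_le_iff_le_add'.2 h, by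
    rw [Multiset.add_comm, sub_add_inter]⟩

theorem card_bind_replicate (s : Multiset α) (m : ℕ) :
    card (s.bind fun a => replicate m a) = card s * m := by
  simp [card_bind]

end Multiset

theorem AddSubgroup.dvd_of_nsmul_mem {G : Type*} [AddGroup G] {H : AddSubgroup G} [Finite H]
    {g : G} {m k : ℕ} (hg : addOrderOf g = Nat.card H * m) (hk : k • g ∈ H) : m ∣ k := by
  have hkill : (Nat.card H * k) • g = 0 := by
    rw [mul_comm, mul_nsmul]
    exact congrArg Subtype.val (card_nsmul_eq_zero' (G := H) (x := ⟨k • g, hk⟩))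
  exact Nat.dvd_of_mul_dvd_mul_left Nat.card_pos (hg ▸ addOrderOf_dvd_of_nsmul_eq_zero hkill)

open Multiset in
theorem sum_add_notMem_subseqSums {G : Type*} [AddCommGroup G] {H : AddSubgroup G} [Finite H]
    {g : G} {m : ℕ} (hg : addOrderOf g = Nat.card H * m) {B : Multiset G} (hB : ∀ x ∈ B, x ∈ H)
    {y : G} (hy : y ∈ H) (hy0 : y ≠ 0) :
    B.sum + y ∉ subseqSums (replicate (m - 1) g + B) (card B) := by
  classical
  rintro ⟨T, hT, hcard, hsum⟩
  obtain ⟨T₁, hT₁, T₂, hT₂, rfl⟩ := exists_le_le_eq_add_of_le_add hT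
  obtain ⟨k, hkm, rfl⟩ := le_replicate_iff.1 hT₁
  have hkg : k • g ∈ H := by
    have hT₂H : T₂.sum ∈ H := H.multiset_sum_mem _ fun x hx => hB x (mem_of_le hT₂ hx)
    have hkg_eq : k • g = B.sum + y - T₂.sum := by
      rw [← hsum, sum_add, sum_replicate, add_sub_cancel_right]
    rw [hkg_eq]
    exact H.sub_mem (H.add_mem (H.multiset_sum_mem B hB) hy) hT₂H
  have hk : k = 0 := by
    obtain rfl | hm := m.eq_zero_or_pos
    · omega
    · exact Nat.eq_zero_of_dvd_of_lt (AddSubgroup.dvd_of_nsmul_mem hg hkg) (by omega)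
  subst hk
  rw [replicate_zero, Multiset.zero_add] at hcard hsum
  rw [eq_of_le_of_card_le hT₂ hcard.ge] at hsum
  exact hy0 (by simpa using hsum)

theorem subseqSums_replicate_add_ne_univ {G : Type*} [AddCommGroup G] {H : AddSubgroup G}
    [Finite H] [Nontrivial H] {g : G} {m : ℕ} (hg : addOrderOf g = Nat.card H * m)
    {B : Multiset G} (hB : ∀ x ∈ B, x ∈ H) :
    subseqSums (Multiset.replicate (m - 1) g + B) (Multiset.card B) ≠ Set.univ := by
  obtain ⟨⟨y, hy⟩, hy0⟩ := exists_ne (0 : H)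
  intro huniv
  exact sum_add_notMem_subseqSums hg hB hy (by simpa using hy0) (huniv ▸ Set.mem_univ _)

open scoped Classical in
theorem stmt_6_general {G : Type*} [AddCommGroup G] [Fintype G]
    (g : G) (hgen : AddSubgroup.zmultiples g = ⊤)
    (hnontriv : 1 < Nat.card G)
    (p : ℕ) (hp : p = (Nat.card G).minFac)
    (H : AddSubgroup G) (hH : Nat.card H = p)
    (S : Multiset G)
    (hS : S = Multiset.replicate (Nat.card G / p - 1) g +
        ((H : Set G).toFinset.val.bind fun h => Multiset.replicate (Nat.card G / p) h)) :
    Multiset.card S = Nat.card G + Nat.card G / p - 1 ∧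
      subseqSums S (Nat.card G) ≠ Set.univ := by
  set m := Nat.card G / p
  set B := (H : Set G).toFinset.val.bind fun h => Multiset.replicate m h
  have hp2 : 2 ≤ p := hp ▸ (Nat.minFac_prime hnontriv.ne').two_le
  have hpm : Nat.card G = p * m := (Nat.mul_div_cancel' (hp ▸ Nat.minFac_dvd _)).symm
  have hcardB : Multiset.card B = Nat.card G := by
    rw [Multiset.card_bind_replicate, Finset.card_val, Set.toFinset_card,
      ← Nat.card_eq_fintype_card, SetLike.coe_sort_coe, hH, hpm]
  have hg : addOrderOf g = Nat.card H * m := by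
    rw [hH, ← hpm, ← Nat.card_zmultiples, hgen, AddSubgroup.card_top]
  have hB : ∀ x ∈ B, x ∈ H := by simp +contextual [B, Multiset.mem_bind, Multiset.mem_replicate]
  have : Nontrivial H := Finite.one_lt_card_iff_nontrivial.1 (by omega)
  refine ⟨by rw [hS, Multiset.card_add, Multiset.card_replicate, hcardB]; grind, ?_⟩
  rw [hS, ← hcardB]
  exact subseqSums_replicate_add_ne_univ hg hB

open scoped Classical in
theorem stmt_6 {G : Type*} [AddCommGroup G] [Fintype G]
    (g : G) (hgen : AddSubgroup.zmultiples g = ⊤)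
    (hcomp : ¬ (Nat.card G).Prime) (hnontriv : 1 < Nat.card G)
    (p : ℕ) (hp : p = (Nat.card G).minFac)
    (H : AddSubgroup G) (hH : Nat.card H = p)
    (S : Multiset G)
    (hS : S = Multiset.replicate (Nat.card G / p - 1) g +
        ((H : Set G).toFinset.val.bind fun h => Multiset.replicate (Nat.card G / p) h)) :
    Multiset.card S = Nat.card G + Nat.card G / p - 1 ∧
      subseqSums S (Nat.card G) ≠ Set.univ :=
  stmt_6_general g hgen hnontriv p hp H hH S hS
end

section
/- Let G be an abelian group and A = {0, x, 2x} ⊆ G a three-element arithmetic progression with ⟨x⟩ = G. If, for an integer n ≥ 3, nA ≠ G, then nA = {0, x, 2x, …, (2n)x} and |nA| = 2n + 1. -/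
open Pointwise

theorem stmt_8 {G : Type*} [AddCommGroup G] [DecidableEq G]
    (x : G) (hgen : AddSubgroup.zmultiples x = ⊤)
    (A : Finset G) (hA : A = {0, x, 2 • x}) (hcard : A.card = 3)
    (n : ℕ) (hn : 3 ≤ n) (hne : (↑(n • A) : Set G) ≠ Set.univ) :
    n • A = (Finset.range (2 * n + 1)).image (fun i => i • x) ∧
      (n • A).card = 2 * n + 1 := by
  subst hA
  have key : ∀ m : ℕ, m • ({0, x, 2 • x} : Finset G) =
      (Finset.range (2 * m + 1)).image (fun i => i • x) := by
    intro m
    induction m with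
    | zero =>
      ext a
      simp [zero_nsmul, Finset.mem_zero]
    | succ k ih =>
      rw [succ_nsmul, ih]
      ext a
      simp only [Finset.mem_add, Finset.mem_image, Finset.mem_range, Finset.mem_insert,
        Finset.mem_singleton]
      constructor
      · rintro ⟨y, ⟨i, hi, rfl⟩, b, hb, rfl⟩
        rcases hb with rfl | rfl | rfl
        · exact ⟨i, by omega, by simp⟩
        · exact ⟨i + 1, by omega, by rw [succ_nsmul]⟩
        · exact ⟨i + 2, by omega, by rw [add_nsmul]⟩
      · rintro ⟨j, hj, rfl⟩
        by_cases h1 : j ≤ 2 * k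
        · exact ⟨j • x, ⟨j, by omega, rfl⟩, 0, Or.inl rfl, by simp⟩
        · by_cases h2 : j = 2 * k + 1
          · subst h2
            exact ⟨(2 * k) • x, ⟨2 * k, by omega, rfl⟩, x, Or.inr (Or.inl rfl),
              (succ_nsmul x (2 * k)).symm⟩
          · have h3 : j = 2 * k + 2 := by omega
            subst h3
            exact ⟨(2 * k) • x, ⟨2 * k, by omega, rfl⟩, 2 • x, Or.inr (Or.inr rfl),
              (add_nsmul x (2 * k) 2).symm⟩
  have horder : ∀ d : ℕ, 0 < d → d ≤ 2 * n → d • x ≠ 0 := by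
    intro d hd hd2 h0
    have hm : addOrderOf x ∣ d := addOrderOf_dvd_of_nsmul_eq_zero h0
    have hmpos : 0 < addOrderOf x := by
      rcases Nat.eq_zero_or_pos (addOrderOf x) with h | h
      · rw [h] at hm
        exact absurd (Nat.eq_zero_of_zero_dvd hm) (by omega)
      · exact h
    have hmle : addOrderOf x ≤ 2 * n := le_trans (Nat.le_of_dvd hd hm) hd2
    apply hne
    rw [key n]
    rw [Set.eq_univ_iff_forall]
    intro g
    have hg : g ∈ AddSubgroup.zmultiples x := by rw [hgen]; trivial
    obtain ⟨k, hk⟩ := AddSubgroup.mem_zmultiples_iff.mp hg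
    set m := addOrderOf x with hmdef
    have hmod : (k % (m : ℤ)) • x = k • x := by
      conv_rhs => rw [← Int.emod_add_mul_ediv k (m : ℤ)]
      rw [add_zsmul, mul_comm, mul_zsmul]
      have : (m : ℤ) • x = 0 := by
        rw [natCast_zsmul, addOrderOf_nsmul_eq_zero]
      rw [this, smul_zero, add_zero]
    have hnonneg : 0 ≤ k % (m : ℤ) := Int.emod_nonneg k (by exact_mod_cast hmpos.ne')
    have hlt : k % (m : ℤ) < m := Int.emod_lt_of_pos k (by exact_mod_cast hmpos)
    refine Finset.mem_coe.mpr (Finset.mem_image.mpr ⟨(k % (m : ℤ)).toNat, ?_, ?_⟩)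
    · rw [Finset.mem_range]
      omega
    · have : ((k % (m : ℤ)).toNat : ℤ) • x = (k % (m : ℤ)) • x := by
        rw [Int.toNat_of_nonneg hnonneg]
      rw [← natCast_zsmul, this, hmod, hk]
  refine ⟨key n, ?_⟩
  rw [key n]
  rw [Finset.card_image_of_injOn, Finset.card_range]
  intro i hi j hj hij
  simp only [Finset.coe_range, Set.mem_Iio] at hi hj
  simp only [] at hij
  by_contra hij'
  rcases Nat.lt_or_ge i j with h | h
  · have h1 := add_nsmul x (j - i) i
    rw [Nat.sub_add_cancel h.le] at h1
    have h2 : (j - i) • x + i • x = 0 + i • x := by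
      rw [← h1, zero_add]; exact hij.symm
    exact horder (j - i) (by omega) (by omega) (add_right_cancel h2)
  · have hlt2 : j < i := by omega
    have h1 := add_nsmul x (i - j) j
    rw [Nat.sub_add_cancel hlt2.le] at h1
    have h2 : (i - j) • x + j • x = 0 + j • x := by
      rw [← h1, zero_add]; exact hij
    exact horder (i - j) (by omega) (by omega) (add_right_cancel h2)
end
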